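/- arXiv:2403.16734 — 7 statements merged into one kernel-verified Lean document; each statement's English description precedes it below -/
import Mathlib

section
/- Run the greedy AAA algorithm on F : ℝⁿ → ℝⁿ satisfying Assumptions 1 and 2, with every iterate matrix B_k invertible, and suppose the initialization satisfies n·c·M·r_0 ≤ 1/24 and c(σ_0 + 4·M·r_0) ≤ 1/3. Then for every k ≥ 0 it holds that σ_k + 3·M·r_k ≤ (1 − 1/(4n))^k·(σ_0 + 3·M·r_0), and consequently r_{k+1} ≤ (3/2)·(1 − 1/(4n))^k · c·(σ_0 + 3·M·r_0) · r_k. -/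
open Matrix MeasureTheory ProbabilityTheory Finset

/-- Euclidean norm of a vector in ℝⁿ. -/
noncomputable def enorm' {n : ℕ} (v : Fin n → ℝ) : ℝ := Real.sqrt (∑ i, (v i) ^ 2)

/-- Frobenius norm of a real n×n matrix. -/
noncomputable def frob {n : ℕ} (A : Matrix (Fin n) (Fin n) ℝ) : ℝ :=
  Real.sqrt (∑ i, ∑ j, (A i j) ^ 2)

/-- Spectral (ℓ₂ operator) norm of a real n×n matrix. -/
noncomputable def opNorm' {n : ℕ} (A : Matrix (Fin n) (Fin n) ℝ) : ℝ :=
  ‖Matrix.toEuclideanCLM (𝕜 := ℝ) A‖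

/-- The AAA update: AAA(B,J,s) = B + ((J−B) s sᵀ (J−B)ᵀ / (sᵀ(J−B)ᵀ(J−B)s)) (J−B)
if (J−B)s ≠ 0, and B otherwise. -/
noncomputable def AAAupd {n : ℕ} (B J : Matrix (Fin n) (Fin n) ℝ) (s : Fin n → ℝ) :
    Matrix (Fin n) (Fin n) ℝ :=
  if (J - B).mulVec s = 0 then B
  else B + (((J - B).mulVec s) ⬝ᵥ ((J - B).mulVec s))⁻¹ •
      (Matrix.vecMulVec ((J - B).mulVec s) ((J - B).mulVec s) * (J - B))

/-- `s` is a standard basis vector maximizing ‖R e_i‖ over the standard basis. -/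
noncomputable def IsGreedy {n : ℕ} (R : Matrix (Fin n) (Fin n) ℝ) (s : Fin n → ℝ) : Prop :=
  ∃ i : Fin n, s = Pi.single i 1 ∧
    ∀ j : Fin n, enorm' (R.mulVec (Pi.single j 1)) ≤ enorm' (R.mulVec (Pi.single i 1))

/-- `P` is the orthogonal-projection matrix onto the subspace `V` of ℝⁿ
(symmetric, idempotent, range `V`, identity on `V`). -/
def IsOrthProj {n : ℕ} (P : Matrix (Fin n) (Fin n) ℝ) (V : Submodule ℝ (Fin n → ℝ)) : Prop :=
  P.IsSymm ∧ P * P = P ∧ (∀ v, P.mulVec v ∈ V) ∧ (∀ v ∈ V, P.mulVec v = v)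

/-- Standard Gaussian measure on ℝⁿ: the n-fold product of N(0,1). -/
noncomputable def stdGaussianPi (n : ℕ) : MeasureTheory.Measure (Fin n → ℝ) :=
  MeasureTheory.Measure.pi fun _ => ProbabilityTheory.gaussianReal 0 1

lemma Matrix.toEuclideanCLM_piLp_equiv_symm {n : ℕ} (A : Matrix (Fin n) (Fin n) ℝ)
    (x : Fin n → ℝ) : Matrix.toEuclideanCLM (𝕜 := ℝ) A ((WithLp.equiv 2 (Fin n → ℝ)).symm x)
      = (WithLp.equiv 2 (Fin n → ℝ)).symm (Matrix.toLin' A x) := rfl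

lemma enorm'_eq {n : ℕ} (v : Fin n → ℝ) :
    enorm' v = ‖(WithLp.equiv 2 (Fin n → ℝ)).symm v‖ := by
  rw [EuclideanSpace.norm_eq, enorm']
  congr 1
  apply Finset.sum_congr rfl
  intro i _
  simp [Real.norm_eq_abs, sq_abs]

lemma frob_eq {n : ℕ} (A : Matrix (Fin n) (Fin n) ℝ) :
    frob A = ‖(WithLp.equiv 2 (Fin n × Fin n → ℝ)).symm (fun p => A p.1 p.2)‖ := by
  rw [EuclideanSpace.norm_eq, frob]
  congr 1
  rw [show (∑ i : Fin n × Fin n, ‖(WithLp.equiv 2 (Fin n × Fin n → ℝ)).symm (fun p => A p.1 p.2) i‖ ^ 2) = ∑ i : Fin n × Fin n, (A i.1 i.2) ^ 2 from Finset.sum_congr rfl fun i _ => by simp [Real.norm_eq_abs, sq_abs], Fintype.sum_prod_type]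

lemma enorm'_nonneg {n : ℕ} (v : Fin n → ℝ) : 0 ≤ enorm' v := Real.sqrt_nonneg _
lemma frob_nonneg {n : ℕ} (A : Matrix (Fin n) (Fin n) ℝ) : 0 ≤ frob A := Real.sqrt_nonneg _

lemma enorm'_sq {n : ℕ} (v : Fin n → ℝ) : enorm' v ^ 2 = ∑ i, (v i) ^ 2 := by
  rw [enorm', Real.sq_sqrt]; positivity

lemma frob_sq {n : ℕ} (A : Matrix (Fin n) (Fin n) ℝ) :
    frob A ^ 2 = ∑ i, ∑ j, (A i j) ^ 2 := by
  rw [frob, Real.sq_sqrt]; positivity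

lemma enorm'_add_le {n : ℕ} (u v : Fin n → ℝ) : enorm' (u + v) ≤ enorm' u + enorm' v := by
  simp only [enorm'_eq]
  rw [show (WithLp.equiv 2 (Fin n → ℝ)).symm (u + v) =
    (WithLp.equiv 2 (Fin n → ℝ)).symm u + (WithLp.equiv 2 (Fin n → ℝ)).symm v by rfl]
  exact norm_add_le _ _

lemma frob_add_le {n : ℕ} (A C : Matrix (Fin n) (Fin n) ℝ) :
    frob (A + C) ≤ frob A + frob C := by
  simp only [frob_eq]
  rw [show (WithLp.equiv 2 (Fin n × Fin n → ℝ)).symm (fun p => (A + C) p.1 p.2) =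
    (WithLp.equiv 2 (Fin n × Fin n → ℝ)).symm (fun p => A p.1 p.2)
    + (WithLp.equiv 2 (Fin n × Fin n → ℝ)).symm (fun p => C p.1 p.2) by rfl]
  exact norm_add_le _ _

lemma frob_neg {n : ℕ} (A : Matrix (Fin n) (Fin n) ℝ) : frob (-A) = frob A := by
  rw [frob, frob]; congr 1; apply Finset.sum_congr rfl; intro i _
  apply Finset.sum_congr rfl; intro j _
  simp [neg_sq]

lemma my_sq_le {a b : ℝ} (ha : 0 ≤ a) (hb : 0 ≤ b) (h : a ^ 2 ≤ b ^ 2) : a ≤ b := by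
  nlinarith

lemma enorm'_mulVec_le_frob {n : ℕ} (A : Matrix (Fin n) (Fin n) ℝ) (v : Fin n → ℝ) :
    enorm' (A.mulVec v) ≤ frob A * enorm' v := by
  apply my_sq_le (enorm'_nonneg _) (mul_nonneg (frob_nonneg _) (enorm'_nonneg _))
  rw [mul_pow, enorm'_sq, enorm'_sq, frob_sq, Finset.sum_mul]
  apply Finset.sum_le_sum
  intro i _
  calc (A.mulVec v i) ^ 2 = (∑ j, A i j * v j) ^ 2 := by rfl
    _ ≤ (∑ j, (A i j) ^ 2) * ∑ j, (v j) ^ 2 := Finset.sum_mul_sq_le_sq_mul_sq _ _ _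

lemma enorm'_mulVec_le_op {n : ℕ} (A : Matrix (Fin n) (Fin n) ℝ) (v : Fin n → ℝ) :
    enorm' (A.mulVec v) ≤ opNorm' A * enorm' v := by
  rw [enorm'_eq, enorm'_eq, show A.mulVec v = Matrix.toLin' A v from (Matrix.toLin'_apply _ _).symm,
    ← Matrix.toEuclideanCLM_piLp_equiv_symm]
  exact (Matrix.toEuclideanCLM (𝕜 := ℝ) A).le_opNorm _

lemma opNorm'_le_frob {n : ℕ} (A : Matrix (Fin n) (Fin n) ℝ) : opNorm' A ≤ frob A := by
  apply ContinuousLinearMap.opNorm_le_bound _ (frob_nonneg A)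
  intro x
  have hx : x = (WithLp.equiv 2 (Fin n → ℝ)).symm (WithLp.equiv 2 (Fin n → ℝ) x) := by
    simp
  rw [hx, Matrix.toEuclideanCLM_piLp_equiv_symm, ← enorm'_eq, ← enorm'_eq,
    Matrix.toLin'_apply]
  exact enorm'_mulVec_le_frob _ _

-- AAA decrease
lemma aaa_dec {n : ℕ} (hn : 0 < n) (B J : Matrix (Fin n) (Fin n) ℝ) (s : Fin n → ℝ)
    (hg : IsGreedy (B - J) s) :
    frob (J - AAAupd B J s) ^ 2 ≤ (1 - 1 / (n : ℝ)) * frob (J - B) ^ 2 := by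
  obtain ⟨i₀, rfl, hmax⟩ := hg
  set R := J - B with hR
  set u : Fin n → ℝ := R.mulVec (Pi.single i₀ 1) with hu_def
  have hu_eq : ∀ i, u i = R i i₀ := by
    intro i; rw [hu_def]; simp [Matrix.mulVec_single]
  set S : Fin n → ℝ := fun j => ∑ i, (R i j) ^ 2 with hS_def
  set U : ℝ := ∑ i, (u i) ^ 2 with hU_def
  set T : ℝ := ∑ j, S j with hT_def
  have hfrobT : frob R ^ 2 = T := by
    rw [frob_sq, hT_def, Finset.sum_comm]
  have hSi₀ : S i₀ = U := by
    rw [hS_def, hU_def]; exact (Finset.sum_congr rfl fun i _ => by rw [hu_eq]).symm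
  have hSle : ∀ j, S j ≤ U := by
    intro j
    have h1 := hmax j
    have hcolsq : ∀ j, enorm' ((B - J).mulVec (Pi.single j 1)) ^ 2 = S j := by
      intro j
      rw [enorm'_sq, hS_def]
      exact Finset.sum_congr rfl fun i _ => by
        simp [Matrix.mulVec_single, Matrix.sub_apply, hR, neg_sq]
        ring
    rw [← hSi₀, ← hcolsq j, ← hcolsq i₀]
    exact pow_le_pow_left₀ (enorm'_nonneg _) h1 2
  have hSnonneg : ∀ j, 0 ≤ S j := fun j => Finset.sum_nonneg fun i _ => sq_nonneg _
  have hTleU : T ≤ (n : ℝ) * U := by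
    calc T ≤ (Finset.univ.card : ℕ) • U := Finset.sum_le_card_nsmul _ _ _ fun j _ => hSle j
      _ = (n : ℝ) * U := by simp [nsmul_eq_mul]
  by_cases hu : (J - B).mulVec (Pi.single i₀ 1) = 0
  · -- u = 0 case: T = 0
    have hU0 : U = 0 := by
      rw [hU_def]
      apply Finset.sum_eq_zero
      intro i _
      have h5 : u i = 0 := by rw [hu_eq]; simpa [hR, Matrix.sub_apply] using congrFun hu i
      rw [h5]; ring
    have hT0 : T = 0 := le_antisymm (by nlinarith [hTleU, hU0])
      (Finset.sum_nonneg fun j _ => hSnonneg j)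
    rw [AAAupd, if_pos hu, ← hR, hfrobT, hT0]
    simp
  · -- main case
    have hUpos : 0 < U := by
      rcases lt_or_eq_of_le (Finset.sum_nonneg (fun i (_ : i ∈ Finset.univ) => sq_nonneg (u i))) with h | h
      · exact h
      · exfalso; apply hu
        funext i
        have : u i ^ 2 = 0 := by
          have := (Finset.sum_eq_zero_iff_of_nonneg (fun i _ => sq_nonneg (u i))).mp h.symm
          exact this i (Finset.mem_univ i)
        have h6 : u i = 0 := by nlinarith [sq_nonneg (u i)]
        rw [hu_eq, hR, Matrix.sub_apply] at h6; simpa using h6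
    have hUne : U ≠ 0 := ne_of_gt hUpos
    set w : Fin n → ℝ := fun j => ∑ k, u k * R k j with hw_def
    have hwi₀ : w i₀ = U := by
      rw [hw_def, hU_def]
      exact Finset.sum_congr rfl fun k _ => by rw [hu_eq]; ring
    have hdot : ((J - B).mulVec (Pi.single i₀ 1)) ⬝ᵥ ((J - B).mulVec (Pi.single i₀ 1)) = U := by
      rw [← hR, ← hu_def, dotProduct, hU_def]
      exact Finset.sum_congr rfl fun i _ => by ring
    have hBentry : ∀ i j, (J - AAAupd B J (Pi.single i₀ 1)) i j = R i j - U⁻¹ * (u i * w j) := by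
      intro i j
      rw [AAAupd, if_neg hu, hdot]
      have hmul : (Matrix.vecMulVec ((J-B).mulVec (Pi.single i₀ 1)) ((J-B).mulVec (Pi.single i₀ 1)) * (J - B)) i j = u i * w j := by
        rw [Matrix.mul_apply, hw_def, Finset.mul_sum]
        exact Finset.sum_congr rfl fun k _ => by
          rw [Matrix.vecMulVec_apply, ← hR, ← hu_def]; ring
      simp only [Matrix.sub_apply, Matrix.add_apply, Matrix.smul_apply, hmul, smul_eq_mul]
      rw [hR, Matrix.sub_apply]
      ring
    have hcolsum : ∀ j, ∑ i, (R i j - U⁻¹ * (u i * w j)) ^ 2 = S j - U⁻¹ * w j ^ 2 := by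
      intro j
      have expand : ∀ i, (R i j - U⁻¹ * (u i * w j)) ^ 2
          = R i j ^ 2 - (2 * U⁻¹ * w j) * (u i * R i j) + (U⁻¹ * w j) ^ 2 * u i ^ 2 := by
        intro i; ring
      rw [Finset.sum_congr rfl fun i _ => expand i]
      rw [Finset.sum_add_distrib, Finset.sum_sub_distrib, ← Finset.mul_sum, ← Finset.mul_sum]
      rw [show (∑ i, u i * R i j) = w j from rfl, ← hU_def,
        show (∑ x : Fin n, R x j ^ 2) = S j from rfl]
      field_simp
      ring
    have hfrob2 : frob (J - AAAupd B J (Pi.single i₀ 1)) ^ 2 = T - U⁻¹ * ∑ j, w j ^ 2 := by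
      rw [frob_sq, Finset.sum_comm]
      rw [Finset.sum_congr rfl fun j (_ : j ∈ Finset.univ) =>
        (Finset.sum_congr rfl fun i (_ : i ∈ Finset.univ) => by rw [hBentry i j])]
      rw [Finset.sum_congr rfl fun j (_ : j ∈ Finset.univ) => hcolsum j]
      rw [Finset.sum_sub_distrib, ← Finset.mul_sum, ← hT_def]
    have hwsum : U ≤ U⁻¹ * ∑ j, w j ^ 2 := by
      have h1 : w i₀ ^ 2 ≤ ∑ j, w j ^ 2 :=
        Finset.single_le_sum (fun j _ => sq_nonneg (w j)) (Finset.mem_univ i₀)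
      rw [hwi₀] at h1
      calc U = U⁻¹ * U ^ 2 := by field_simp
        _ ≤ U⁻¹ * ∑ j, w j ^ 2 := by
          apply mul_le_mul_of_nonneg_left h1 (by positivity)
    rw [hfrob2, hfrobT]
    have hnpos : (0 : ℝ) < n := by exact_mod_cast hn
    have hUT : T / n ≤ U := by
      rw [div_le_iff₀ hnpos]
      nlinarith
    have hkey : (1 - 1 / (n:ℝ)) * T = T - T / n := by field_simp
    calc T - U⁻¹ * ∑ j, w j ^ 2 ≤ T - U := by linarith
      _ ≤ (1 - 1 / (n:ℝ)) * T := by rw [hkey]; linarith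

lemma euclid_clm_eq {n : ℕ} (A : Matrix (Fin n) (Fin n) ℝ) :
    (Matrix.toEuclideanCLM (𝕜 := ℝ) A : EuclideanSpace ℝ (Fin n) →L[ℝ] EuclideanSpace ℝ (Fin n))
    = ((PiLp.continuousLinearEquiv 2 ℝ (fun _ : Fin n => ℝ)).symm :
        (Fin n → ℝ) →L[ℝ] EuclideanSpace ℝ (Fin n)).comp
      ((A.mulVecLin.toContinuousLinearMap).comp
        ((PiLp.continuousLinearEquiv 2 ℝ (fun _ : Fin n => ℝ)) :
          EuclideanSpace ℝ (Fin n) →L[ℝ] (Fin n → ℝ))) := by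
  ext x
  have hx : x = (WithLp.equiv 2 (Fin n → ℝ)).symm (WithLp.equiv 2 (Fin n → ℝ) x) := by simp
  rw [hx, Matrix.toEuclideanCLM_piLp_equiv_symm]
  rfl

lemma mv_bound {n : ℕ}
    (F : (Fin n → ℝ) → (Fin n → ℝ)) (Jac : (Fin n → ℝ) → Matrix (Fin n) (Fin n) ℝ)
    (hJacF : ∀ y, HasFDerivAt F ((Jac y).mulVecLin.toContinuousLinearMap) y)
    (xstar : Fin n → ℝ) (M : ℝ) (hM : 0 ≤ M)
    (hLip : ∀ y, frob (Jac y - Jac xstar) ≤ M * enorm' (y - xstar))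
    (y : Fin n → ℝ) :
    enorm' (F y - F xstar - (Jac xstar).mulVec (y - xstar))
      ≤ (M * enorm' (y - xstar)) * enorm' (y - xstar) := by
  set E := EuclideanSpace ℝ (Fin n)
  set e : E ≃L[ℝ] (Fin n → ℝ) := PiLp.continuousLinearEquiv 2 ℝ (fun _ : Fin n => ℝ) with he
  set f : E → E := fun z => (WithLp.equiv 2 (Fin n → ℝ)).symm (F (WithLp.equiv 2 (Fin n → ℝ) z))
    with hf
  have hfderiv : ∀ z : E, HasFDerivAt f
      (Matrix.toEuclideanCLM (𝕜 := ℝ) (Jac (WithLp.equiv 2 (Fin n → ℝ) z))) z := by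
    intro z
    rw [euclid_clm_eq]
    have h1 : HasFDerivAt (F ∘ e) (((Jac (e z)).mulVecLin.toContinuousLinearMap).comp
        (e : E →L[ℝ] (Fin n → ℝ))) z :=
      (hJacF (e z)).comp z e.hasFDerivAt
    exact (e.symm.hasFDerivAt.comp z h1 : _)
  set xE : E := (WithLp.equiv 2 (Fin n → ℝ)).symm xstar with hxE
  set yE : E := (WithLp.equiv 2 (Fin n → ℝ)).symm y with hyE
  set ρ : ℝ := ‖yE - xE‖ with hρ
  have hρ_eq : ρ = enorm' (y - xstar) := by rw [hρ, enorm'_eq]; rfl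
  have hbound : ∀ z ∈ Metric.closedBall xE ρ,
      ‖Matrix.toEuclideanCLM (𝕜 := ℝ) (Jac (WithLp.equiv 2 (Fin n → ℝ) z))
        - Matrix.toEuclideanCLM (𝕜 := ℝ) (Jac xstar)‖ ≤ M * ρ := by
    intro z hz
    rw [← map_sub]
    have h2 : ‖Matrix.toEuclideanCLM (𝕜 := ℝ)
        (Jac (WithLp.equiv 2 (Fin n → ℝ) z) - Jac xstar)‖
        = opNorm' (Jac (WithLp.equiv 2 (Fin n → ℝ) z) - Jac xstar) := rfl
    rw [h2]
    refine (opNorm'_le_frob _).trans ((hLip _).trans ?_)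
    have h3 : enorm' ((WithLp.equiv 2 (Fin n → ℝ)) z - xstar) = ‖z - xE‖ := by
      rw [enorm'_eq]; rfl
    rw [h3]
    have h4 : ‖z - xE‖ ≤ ρ := by
      rw [Metric.mem_closedBall, dist_eq_norm] at hz; exact hz
    exact mul_le_mul_of_nonneg_left h4 hM
  have hmv := Convex.norm_image_sub_le_of_norm_hasFDerivWithin_le'
    (f := f) (φ := Matrix.toEuclideanCLM (𝕜 := ℝ) (Jac xstar)) (C := M * ρ)
    (s := Metric.closedBall xE ρ)
    (fun z _ => (hfderiv z).hasFDerivWithinAt) hbound (convex_closedBall _ _)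
    (Metric.mem_closedBall_self (by positivity))
    (by rw [Metric.mem_closedBall, dist_eq_norm])
  -- identify the pieces
  have hfy : f yE = (WithLp.equiv 2 (Fin n → ℝ)).symm (F y) := by
    rw [hf]; simp [hyE]
  have hfx : f xE = (WithLp.equiv 2 (Fin n → ℝ)).symm (F xstar) := by
    rw [hf]; simp [hxE]
  have hφ : (Matrix.toEuclideanCLM (𝕜 := ℝ) (Jac xstar)) (yE - xE)
      = (WithLp.equiv 2 (Fin n → ℝ)).symm ((Jac xstar).mulVec (y - xstar)) := by
    have : yE - xE = (WithLp.equiv 2 (Fin n → ℝ)).symm (y - xstar) := rfl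
    rw [this, Matrix.toEuclideanCLM_piLp_equiv_symm, Matrix.toLin'_apply]
  rw [hfy, hfx, hφ] at hmv
  have hgoal : enorm' (F y - F xstar - (Jac xstar).mulVec (y - xstar))
      = ‖(WithLp.equiv 2 (Fin n → ℝ)).symm (F y) - (WithLp.equiv 2 (Fin n → ℝ)).symm (F xstar)
        - (WithLp.equiv 2 (Fin n → ℝ)).symm ((Jac xstar).mulVec (y - xstar))‖ := by
    rw [enorm'_eq]; rfl
  rw [hgoal, ← hρ_eq]
  exact hmv


lemma enorm'_neg {n : ℕ} (v : Fin n → ℝ) : enorm' (-v) = enorm' v := by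
  rw [enorm', enorm']
  congr 1
  exact Finset.sum_congr rfl fun i _ => by simp [neg_sq]

lemma frob_sub_comm {n : ℕ} (X Y : Matrix (Fin n) (Fin n) ℝ) : frob (X - Y) = frob (Y - X) := by
  rw [← frob_neg (X - Y), neg_sub]

lemma binv_bound {n : ℕ} (Js : Matrix (Fin n) (Fin n) ℝ) (hJs : IsUnit Js)
    (c : ℝ) (hc : c = opNorm' Js⁻¹) (Bk : Matrix (Fin n) (Fin n) ℝ) (hB : IsUnit Bk)
    (hσ3 : c * frob (Bk - Js) ≤ 1/3) (w : Fin n → ℝ) :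
    enorm' (Bk⁻¹.mulVec w) ≤ 3 * c / 2 * enorm' w := by
  have hJdet : IsUnit Js.det := (Matrix.isUnit_iff_isUnit_det _).mp hJs
  have hBdet : IsUnit Bk.det := (Matrix.isUnit_iff_isUnit_det _).mp hB
  set v : Fin n → ℝ := Bk⁻¹.mulVec w with hv
  have hBv : Bk.mulVec v = w := by
    rw [hv, Matrix.mulVec_mulVec, Matrix.mul_nonsing_inv _ hBdet, Matrix.one_mulVec]
  have hlow : enorm' v ≤ c * enorm' (Bk.mulVec v) + (1/3) * enorm' v := by
    have h1 : enorm' v ≤ c * enorm' (Js.mulVec v) := by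
      have hvid : v = Js⁻¹.mulVec (Js.mulVec v) := by
        rw [Matrix.mulVec_mulVec, Matrix.nonsing_inv_mul _ hJdet, Matrix.one_mulVec]
      calc enorm' v = enorm' (Js⁻¹.mulVec (Js.mulVec v)) := by rw [← hvid]
        _ ≤ opNorm' Js⁻¹ * enorm' (Js.mulVec v) := enorm'_mulVec_le_op _ _
        _ = c * enorm' (Js.mulVec v) := by rw [hc]
    have h2 : enorm' (Js.mulVec v) ≤ enorm' (Bk.mulVec v) + frob (Bk - Js) * enorm' v := by
      have hsplit : Js.mulVec v = Bk.mulVec v + (Js - Bk).mulVec v := by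
        rw [Matrix.sub_mulVec]; abel
      calc enorm' (Js.mulVec v) = enorm' (Bk.mulVec v + (Js - Bk).mulVec v) := by rw [← hsplit]
        _ ≤ enorm' (Bk.mulVec v) + enorm' ((Js - Bk).mulVec v) := enorm'_add_le _ _
        _ ≤ enorm' (Bk.mulVec v) + frob (Js - Bk) * enorm' v := by
            have := enorm'_mulVec_le_frob (Js - Bk) v
            linarith
        _ = enorm' (Bk.mulVec v) + frob (Bk - Js) * enorm' v := by rw [frob_sub_comm]
    have hcnn : 0 ≤ c := hc ▸ norm_nonneg _
    have h3 : c * (frob (Bk - Js) * enorm' v) ≤ (1/3) * enorm' v := by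
      have := mul_le_mul_of_nonneg_right hσ3 (enorm'_nonneg v)
      nlinarith
    calc enorm' v ≤ c * enorm' (Js.mulVec v) := h1
      _ ≤ c * (enorm' (Bk.mulVec v) + frob (Bk - Js) * enorm' v) :=
          mul_le_mul_of_nonneg_left h2 hcnn
      _ = c * enorm' (Bk.mulVec v) + c * (frob (Bk - Js) * enorm' v) := by ring
      _ ≤ c * enorm' (Bk.mulVec v) + (1/3) * enorm' v := by linarith
  rw [hBv] at hlow
  linarith

lemma sigma_rec {n : ℕ} (hn : 0 < n) (Bk Jk Js : Matrix (Fin n) (Fin n) ℝ) (s : Fin n → ℝ)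
    (hg : IsGreedy (Bk - Jk) s) :
    frob (AAAupd Bk Jk s - Js) ≤ (1 - 1/(2*(n:ℝ))) * (frob (Bk - Js) + frob (Jk - Js))
      + frob (Jk - Js) := by
  have hν : 0 < (n:ℝ) := by exact_mod_cast hn
  have hν1 : (1:ℝ) ≤ (n:ℝ) := by exact_mod_cast hn
  have hq : (0:ℝ) ≤ 1 - 1/(2*(n:ℝ)) := by
    have : 1/(2*(n:ℝ)) ≤ 1/2 := by
      apply div_le_div_of_nonneg_left <;> linarith
    linarith
  have hdec := aaa_dec hn Bk Jk s hg
  have h1 : frob (Jk - AAAupd Bk Jk s) ≤ (1 - 1/(2*(n:ℝ))) * frob (Jk - Bk) := by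
    apply my_sq_le (frob_nonneg _) (mul_nonneg hq (frob_nonneg _))
    calc frob (Jk - AAAupd Bk Jk s) ^ 2 ≤ (1 - 1/(n:ℝ)) * frob (Jk - Bk) ^ 2 := hdec
      _ ≤ ((1 - 1/(2*(n:ℝ))) * frob (Jk - Bk)) ^ 2 := by
          have h2 : (1 - 1/(n:ℝ)) ≤ (1 - 1/(2*(n:ℝ)))^2 := by
            have h3 : 0 < 1/(2*(n:ℝ)) := by positivity
            have h4 : 1/(n:ℝ) = 2 * (1/(2*(n:ℝ))) := by field_simp
            nlinarith [sq_nonneg (1/(2*(n:ℝ)))]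
          nlinarith [sq_nonneg (frob (Jk - Bk)), frob_nonneg (Jk - Bk)]
  have h5 : frob (Jk - Bk) ≤ frob (Bk - Js) + frob (Jk - Js) := by
    rw [frob_sub_comm]
    calc frob (Bk - Jk) = frob ((Bk - Js) + (Js - Jk)) := by congr 1; abel
      _ ≤ frob (Bk - Js) + frob (Js - Jk) := frob_add_le _ _
      _ = frob (Bk - Js) + frob (Jk - Js) := by rw [frob_sub_comm Js Jk]
  calc frob (AAAupd Bk Jk s - Js)
      = frob ((AAAupd Bk Jk s - Jk) + (Jk - Js)) := by congr 1; abel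
    _ ≤ frob (AAAupd Bk Jk s - Jk) + frob (Jk - Js) := frob_add_le _ _
    _ = frob (Jk - AAAupd Bk Jk s) + frob (Jk - Js) := by rw [frob_sub_comm]
    _ ≤ (1 - 1/(2*(n:ℝ))) * frob (Jk - Bk) + frob (Jk - Js) := by linarith
    _ ≤ (1 - 1/(2*(n:ℝ))) * (frob (Bk - Js) + frob (Jk - Js)) + frob (Jk - Js) := by
        nlinarith [mul_le_mul_of_nonneg_left h5 hq]


set_option maxHeartbeats 2000000 in
theorem stmt_2 {n : ℕ} (hn : 0 < n)
    (F : (Fin n → ℝ) → (Fin n → ℝ)) (Jac : (Fin n → ℝ) → Matrix (Fin n) (Fin n) ℝ)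
    (hF : ContDiff ℝ 1 F)
    (hJacF : ∀ y, HasFDerivAt F ((Jac y).mulVecLin.toContinuousLinearMap) y)
    (xstar : Fin n → ℝ) (M : ℝ) (hM : 0 < M)
    (hLip : ∀ y, frob (Jac y - Jac xstar) ≤ M * enorm' (y - xstar))
    (hFstar : F xstar = 0) (hJstar : IsUnit (Jac xstar))
    (x : ℕ → Fin n → ℝ) (B : ℕ → Matrix (Fin n) (Fin n) ℝ) (s : ℕ → Fin n → ℝ)
    (hBinv : ∀ t, IsUnit (B t))
    (hx : ∀ t, x (t + 1) = x t - (B t)⁻¹.mulVec (F (x t)))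
    (hgreedy : ∀ t, IsGreedy (B t - Jac (x t)) (s t))
    (hBup : ∀ t, B (t + 1) = AAAupd (B t) (Jac (x t)) (s t))
    (r σ : ℕ → ℝ)
    (hr : ∀ t, r t = enorm' (x t - xstar))
    (hσ : ∀ t, σ t = frob (B t - Jac xstar))
    (c : ℝ) (hc : c = opNorm' ((Jac xstar)⁻¹))
    (hinit1 : (n : ℝ) * c * M * r 0 ≤ 1 / 24)
    (hinit2 : c * (σ 0 + 4 * M * r 0) ≤ 1 / 3) :
    ∀ k : ℕ,
      σ k + 3 * M * r k ≤ (1 - 1 / (4 * (n : ℝ))) ^ k * (σ 0 + 3 * M * r 0) ∧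
      r (k + 1) ≤ 3 / 2 * (1 - 1 / (4 * (n : ℝ))) ^ k * c * (σ 0 + 3 * M * r 0) * r k := by
  have hνpos : (0:ℝ) < (n:ℝ) := by exact_mod_cast hn
  have hn1 : (1:ℝ) ≤ (n:ℝ) := by exact_mod_cast hn
  have hcnn : 0 ≤ c := hc ▸ norm_nonneg _
  have hrnn : ∀ t, 0 ≤ r t := fun t => (hr t) ▸ enorm'_nonneg _
  have hσnn : ∀ t, 0 ≤ σ t := fun t => (hσ t) ▸ frob_nonneg _
  set θ : ℝ := 1 - 1/(4*(n:ℝ)) with hθ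
  have hθ0 : 0 ≤ θ := by
    rw [hθ]
    have : 1/(4*(n:ℝ)) ≤ 1/4 := by
      apply div_le_div_of_nonneg_left <;> linarith
    linarith
  have hθ1 : θ ≤ 1 := by
    rw [hθ]
    have : 0 < 1/(4*(n:ℝ)) := by positivity
    linarith
  -- σ recursion
  have hrecσ : ∀ t, σ (t+1) ≤ (1 - 1/(2*(n:ℝ))) * (σ t + M * r t) + M * r t := by
    intro t
    have hs := sigma_rec hn (B t) (Jac (x t)) (Jac xstar) (s t) (hgreedy t)
    rw [← hBup t] at hs
    have hJ : frob (Jac (x t) - Jac xstar) ≤ M * r t := by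
      rw [hr t]; exact hLip (x t)
    have hq : (0:ℝ) ≤ 1 - 1/(2*(n:ℝ)) := by
      have : 1/(2*(n:ℝ)) ≤ 1/2 := by
        apply div_le_div_of_nonneg_left <;> linarith
      linarith
    rw [hσ (t+1), hσ t] at *
    nlinarith [mul_le_mul_of_nonneg_left hJ hq]
  -- r recursion
  have hrecr : ∀ t, c * σ t ≤ 1/3 → r (t+1) ≤ 3*c/2 * ((σ t + M * r t) * r t) := by
    intro t hct
    have hdet : IsUnit (B t).det := (Matrix.isUnit_iff_isUnit_det _).mp (hBinv t)
    have hid : x (t+1) - xstar = (B t)⁻¹.mulVec ((B t).mulVec (x t - xstar) - F (x t)) := by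
      rw [hx t, Matrix.mulVec_sub, Matrix.mulVec_mulVec, Matrix.nonsing_inv_mul _ hdet,
        Matrix.one_mulVec]
      abel
    have h1 : r (t+1) ≤ 3*c/2 * enorm' ((B t).mulVec (x t - xstar) - F (x t)) := by
      rw [hr (t+1), hid]
      exact binv_bound (Jac xstar) hJstar c hc (B t) (hBinv t) ((hσ t) ▸ hct) _
    have hsplit : (B t).mulVec (x t - xstar) - F (x t)
        = (B t - Jac xstar).mulVec (x t - xstar)
          + -(F (x t) - F xstar - (Jac xstar).mulVec (x t - xstar)) := by
      rw [hFstar, Matrix.sub_mulVec]; abel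
    have h2 : enorm' ((B t).mulVec (x t - xstar) - F (x t)) ≤ (σ t + M * r t) * r t := by
      rw [hsplit]
      calc enorm' ((B t - Jac xstar).mulVec (x t - xstar)
            + -(F (x t) - F xstar - (Jac xstar).mulVec (x t - xstar)))
          ≤ enorm' ((B t - Jac xstar).mulVec (x t - xstar))
            + enorm' (-(F (x t) - F xstar - (Jac xstar).mulVec (x t - xstar))) :=
            enorm'_add_le _ _
        _ = enorm' ((B t - Jac xstar).mulVec (x t - xstar))
            + enorm' (F (x t) - F xstar - (Jac xstar).mulVec (x t - xstar)) := by
            rw [enorm'_neg]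
        _ ≤ frob (B t - Jac xstar) * enorm' (x t - xstar)
            + (M * enorm' (x t - xstar)) * enorm' (x t - xstar) := by
            have hb1 := enorm'_mulVec_le_frob (B t - Jac xstar) (x t - xstar)
            have hb2 := mv_bound F Jac hJacF xstar M hM.le hLip (x t)
            linarith
        _ = (σ t + M * r t) * r t := by rw [hσ t, hr t]; ring
    have hc32 : (0:ℝ) ≤ 3*c/2 := by linarith
    calc r (t+1) ≤ 3*c/2 * enorm' ((B t).mulVec (x t - xstar) - F (x t)) := h1
      _ ≤ 3*c/2 * ((σ t + M * r t) * r t) := mul_le_mul_of_nonneg_left h2 hc32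
  -- the induction
  have hΦ0 : 0 ≤ σ 0 + 3*M*r 0 := by nlinarith [hσnn 0, hrnn 0, mul_nonneg hM.le (hrnn 0)]
  have key : ∀ k, (σ k + 3*M*r k ≤ θ^k * (σ 0 + 3*M*r 0)) ∧ r k ≤ r 0 := by
    intro k
    induction k with
    | zero => simp
    | succ k ih =>
      obtain ⟨ih1, ih2⟩ := ih
      have ha := hσnn k
      have hb := hrnn k
      have hMb : 0 ≤ M * r k := mul_nonneg hM.le hb
      have hθk : θ^k ≤ 1 := pow_le_one₀ hθ0 hθ1
      have hΦk : σ k + 3*M*r k ≤ σ 0 + 3*M*r 0 := by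
        calc σ k + 3*M*r k ≤ θ^k * (σ 0 + 3*M*r 0) := ih1
          _ ≤ 1 * (σ 0 + 3*M*r 0) := mul_le_mul_of_nonneg_right hθk hΦ0
          _ = σ 0 + 3*M*r 0 := one_mul _
      have hcΦ : c * (σ k + 3*M*r k) ≤ 1/3 := by
        calc c * (σ k + 3*M*r k) ≤ c * (σ 0 + 3*M*r 0) := mul_le_mul_of_nonneg_left hΦk hcnn
          _ ≤ c * (σ 0 + 4*M*r 0) := by nlinarith [mul_nonneg hcnn (mul_nonneg hM.le (hrnn 0))]
          _ ≤ 1/3 := hinit2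
      have hcσ : c * σ k ≤ 1/3 := by nlinarith [mul_nonneg hcnn hMb]
      have hcab : c * (σ k + M * r k) ≤ 1/3 := by nlinarith [mul_nonneg hcnn hMb]
      have hA1 := hrecσ k
      have hA2 := hrecr k hcσ
      have hA3 : c*M*r k ≤ 1/(24*(n:ℝ)) := by
        have h1 : c*M*r k ≤ c*M*r 0 := by
          have := mul_le_mul_of_nonneg_left ih2 (mul_nonneg hcnn hM.le)
          calc c*M*r k = (c*M)*r k := by ring
            _ ≤ (c*M)*r 0 := this
            _ = c*M*r 0 := by ring
        have h2 : c*M*r 0 ≤ 1/(24*(n:ℝ)) := by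
          rw [le_div_iff₀ (by positivity : (0:ℝ) < 24*(n:ℝ))]
          nlinarith [hinit1]
        linarith
      have e2 : 1/(2*(n:ℝ)) = (1/(n:ℝ))/2 := by field_simp
      have e4 : 1/(4*(n:ℝ)) = (1/(n:ℝ))/4 := by field_simp
      have e24 : 1/(24*(n:ℝ)) = (1/(n:ℝ))/24 := by field_simp
      have hν0 : (0:ℝ) < 1/(n:ℝ) := by positivity
      have hν1 : 1/(n:ℝ) ≤ 1 := by rw [div_le_one hνpos]; exact hn1
      constructor
      · have hstep : σ (k+1) + 3*M*r (k+1) ≤ θ * (σ k + 3*M*r k) := by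
          have h5 : (c*M*r k) * σ k ≤ (1/(24*(n:ℝ))) * σ k :=
            mul_le_mul_of_nonneg_right hA3 ha
          have h6 : (c*M*r k) * (M*r k) ≤ (1/(24*(n:ℝ))) * (M*r k) :=
            mul_le_mul_of_nonneg_right hA3 hMb
          have h7 : 3*M*r (k+1) ≤ 3*M*(3*c/2 * ((σ k + M * r k) * r k)) := by
            have := mul_le_mul_of_nonneg_left hA2 (by linarith : (0:ℝ) ≤ 3*M)
            linarith
          rw [hθ]
          nlinarith [mul_nonneg (mul_nonneg hν0.le ha) (by norm_num : (0:ℝ) ≤ 1),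
            mul_nonneg hν0.le ha, mul_nonneg hν0.le hMb,
            mul_nonneg (sub_nonneg.mpr hν1) ha, mul_nonneg (sub_nonneg.mpr hν1) hMb]
        calc σ (k+1) + 3*M*r (k+1) ≤ θ * (σ k + 3*M*r k) := hstep
          _ ≤ θ * (θ^k * (σ 0 + 3*M*r 0)) :=
            mul_le_mul_of_nonneg_left ih1 hθ0
          _ = θ^(k+1) * (σ 0 + 3*M*r 0) := by ring
      · have hhalf : r (k+1) ≤ r k := by
          have h8 : c * (σ k + M * r k) * r k ≤ (1/3) * r k :=
            mul_le_mul_of_nonneg_right hcab hb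
          nlinarith
        linarith
  intro k
  obtain ⟨k1, k2⟩ := key k
  refine ⟨k1, ?_⟩
  have hb := hrnn k
  have hcΦk : c * (σ k + M * r k) ≤ c * (θ^k * (σ 0 + 3*M*r 0)) := by
    have hMb : 0 ≤ M * r k := mul_nonneg hM.le hb
    have : σ k + M * r k ≤ θ^k * (σ 0 + 3*M*r 0) := by nlinarith
    exact mul_le_mul_of_nonneg_left this hcnn
  have hcσk : c * σ k ≤ 1/3 := by
    have hθk : θ^k ≤ 1 := pow_le_one₀ hθ0 hθ1
    have hMb : 0 ≤ M * r k := mul_nonneg hM.le hb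
    have h1 : σ k + 3*M*r k ≤ σ 0 + 3*M*r 0 := by
      calc σ k + 3*M*r k ≤ θ^k * (σ 0 + 3*M*r 0) := k1
        _ ≤ 1 * (σ 0 + 3*M*r 0) := mul_le_mul_of_nonneg_right hθk hΦ0
        _ = σ 0 + 3*M*r 0 := one_mul _
    nlinarith [mul_le_mul_of_nonneg_left h1 hcnn, mul_nonneg hcnn hMb,
      mul_nonneg hcnn (mul_nonneg hM.le (hrnn 0))]
  have hA2 := hrecr k hcσk
  calc r (k+1) ≤ 3*c/2 * ((σ k + M * r k) * r k) := hA2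
    _ = 3/2 * ((c * (σ k + M * r k)) * r k) := by ring
    _ ≤ 3/2 * ((c * (θ^k * (σ 0 + 3*M*r 0))) * r k) := by
        have := mul_le_mul_of_nonneg_right hcΦk hb
        nlinarith
    _ = 3 / 2 * θ ^ k * c * (σ 0 + 3 * M * r 0) * r k := by ring
end

section
/- Run AA-I on the linear system F(x) = Jx − b with J ∈ ℝ^{n×n} invertible: x_{t+1} = x_t − B_t⁻¹(J x_t − b) with each B_t invertible, s_t = x_{t+1} − x_t, and B_{t+1} = B_t + (J − B_t) s_t (P_t^⊥ s_t)ᵀ / ((P_t^⊥ s_t)ᵀ s_t), where P_t is the orthogonal projection onto span(s_0, …, s_{t−1}) (P_0 = 0) and P_t^⊥ = I − P_t. If k* is an index such that s_0, …, s_{k*−1} are linearly independent and s_{k*} lies in span(s_0, …, s_{k*−1}), then F(x_{k*+1}) = 0, i.e., x_{k*+1} solves Jx = b. -/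
open Matrix MeasureTheory ProbabilityTheory Finset

lemma vmv_aux {n : ℕ} (u w v : Fin n → ℝ) :
    (Matrix.vecMulVec u w).mulVec v = (w ⬝ᵥ v) • u := by
  ext i
  simp only [Matrix.mulVec, Matrix.vecMulVec_apply, dotProduct, Pi.smul_apply,
    smul_eq_mul, Finset.sum_mul]
  exact Finset.sum_congr rfl fun j _ => by ring

theorem stmt_7 {n : ℕ} (hn : 0 < n)
    (J : Matrix (Fin n) (Fin n) ℝ) (hJ : IsUnit J) (b : Fin n → ℝ)
    (x : ℕ → Fin n → ℝ) (B : ℕ → Matrix (Fin n) (Fin n) ℝ)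
    (s : ℕ → Fin n → ℝ) (P : ℕ → Matrix (Fin n) (Fin n) ℝ)
    (hBinv : ∀ t, IsUnit (B t))
    (hx : ∀ t, x (t + 1) = x t - (B t)⁻¹.mulVec (J.mulVec (x t) - b))
    (hs : ∀ t, s t = x (t + 1) - x t)
    (hP : ∀ t, IsOrthProj (P t) (Submodule.span ℝ (s '' Set.Iio t)))
    (hBup : ∀ t, B (t + 1) = B t +
      ((((1 : Matrix (Fin n) (Fin n) ℝ) - P t).mulVec (s t)) ⬝ᵥ (s t))⁻¹ •
        Matrix.vecMulVec ((J - B t).mulVec (s t))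
          (((1 : Matrix (Fin n) (Fin n) ℝ) - P t).mulVec (s t)))
    (kst : ℕ)
    (hindep : LinearIndependent ℝ (fun i : Fin kst => s i))
    (hdep : s kst ∈ Submodule.span ℝ (s '' Set.Iio kst)) :
    J.mulVec (x (kst + 1)) - b = 0 := by
  have hdet : ∀ t, IsUnit (B t).det := fun t => (Matrix.isUnit_iff_isUnit_det _).mp (hBinv t)
  have hBs : ∀ t, (B t).mulVec (s t) = b - J.mulVec (x t) := by
    intro t
    rw [hs t, hx t, sub_sub_cancel_left, Matrix.mulVec_neg, Matrix.mulVec_mulVec,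
      Matrix.mul_nonsing_inv _ (hdet t), Matrix.one_mulVec]
    abel
  have key : ∀ t, t ≤ kst → ∀ i, i < t → (J - B t).mulVec (s i) = 0 := by
    intro t
    induction t with
    | zero => intro _ i hi; omega
    | succ t ih =>
      intro ht i hi
      obtain ⟨hPsymm, hPidem, hPmem, hPfix⟩ := hP t
      set w := ((1 : Matrix (Fin n) (Fin n) ℝ) - P t).mulVec (s t) with hw
      have hwst : w = s t - (P t).mulVec (s t) := by
        rw [hw, Matrix.sub_mulVec, Matrix.one_mulVec]
      have hPw : (P t).mulVec w = 0 := by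
        rw [hwst, Matrix.mulVec_sub, Matrix.mulVec_mulVec, hPidem, sub_self]
      have hdotspan : ∀ v ∈ Submodule.span ℝ (s '' Set.Iio t), w ⬝ᵥ v = 0 := by
        intro v hv
        rw [← hPfix v hv, Matrix.dotProduct_mulVec, show (P t) = (P t)ᵀ from hPsymm.symm,
          Matrix.vecMul_transpose, hPw, zero_dotProduct]
      rcases Nat.lt_succ_iff_lt_or_eq.mp hi with hi' | rfl
      · have h0 : (J - B t).mulVec (s i) = 0 := ih (by omega) i hi'
        have hsi : s i ∈ Submodule.span ℝ (s '' Set.Iio t) :=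
          Submodule.subset_span ⟨i, hi', rfl⟩
        rw [hBup t, ← hw, sub_add_eq_sub_sub, Matrix.sub_mulVec, Matrix.smul_mulVec,
          vmv_aux, hdotspan (s i) hsi, h0, zero_smul, smul_zero, sub_zero]
      · have htk : i < kst := by omega
        have hnot : s i ∉ Submodule.span ℝ (s '' Set.Iio i) := by
          have h1 : (fun j : Fin kst => s j) '' {j : Fin kst | (j : ℕ) < i} = s '' Set.Iio i := by
            ext y; constructor
            · rintro ⟨j, hj, rfl⟩; exact ⟨j, hj, rfl⟩
            · rintro ⟨j, hj, rfl⟩; exact ⟨⟨j, lt_trans hj htk⟩, hj, rfl⟩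
          rw [← h1]
          exact hindep.notMem_span_image (x := ⟨i, htk⟩) (by simp)
        have hwne : w ≠ 0 := by
          intro h0
          apply hnot
          have hsi : s i = (P i).mulVec (s i) := by
            have := hwst; rw [h0] at this
            exact sub_eq_zero.mp this.symm
          rw [hsi]; exact hPmem _
        have hcne : w ⬝ᵥ (s i) ≠ 0 := by
          have h2 : w ⬝ᵥ ((P i).mulVec (s i)) = 0 := hdotspan _ (hPmem _)
          have hc : w ⬝ᵥ s i = w ⬝ᵥ w := by
            conv_lhs => rw [show s i = w + (P i).mulVec (s i) by rw [hwst]; abel]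
            rw [dotProduct_add, h2, add_zero]
          rw [hc]
          exact fun h => hwne (dotProduct_self_eq_zero.mp h)
        rw [hBup i, ← hw, sub_add_eq_sub_sub, Matrix.sub_mulVec, Matrix.smul_mulVec,
          vmv_aux, smul_smul, inv_mul_cancel₀ hcne, one_smul, sub_self]
  have hvanish : (J - B kst).mulVec (s kst) = 0 := by
    have hgen : ∀ v ∈ Submodule.span ℝ (s '' Set.Iio kst), (J - B kst).mulVec v = 0 := by
      intro v hv
      induction hv using Submodule.span_induction with
      | mem y hy => obtain ⟨i, hi, rfl⟩ := hy; exact key kst le_rfl i hi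
      | zero => simp
      | add y z _ _ hy hz => rw [Matrix.mulVec_add, hy, hz, add_zero]
      | smul c y _ hy => rw [Matrix.mulVec_smul, hy, smul_zero]
    exact hgen _ hdep
  have hfin : J.mulVec (x (kst + 1)) - b = (J - B kst).mulVec (s kst) := by
    have h1 : x (kst + 1) = x kst + s kst := by rw [hs kst]; abel
    rw [h1, Matrix.mulVec_add, Matrix.sub_mulVec, hBs kst]
    abel
  rw [hfin, hvanish]
end

section
/- Let J ∈ ℝ^{n×n}, and let B_0, B_1, …, s_0, s_1, … be generated by the AA-I update B_{t+1} = B_t + (J − B_t) s_t (P_t^⊥ s_t)ᵀ / ((P_t^⊥ s_t)ᵀ s_t), where P_t is the orthogonal projection onto span(s_0, …, s_{t−1}) (P_0 = 0), P_t^⊥ = I − P_t, and s_0, …, s_k are linearly independent. Then: (a) (B_{t+1} − J) s_i = 0 for all 0 ≤ i ≤ t ≤ k; (b) (J − B_t) P_t^⊥ = J − B_t for all t ≤ k; and consequently (c) rank(B_t − J) ≤ n − t for all t ≤ k+1. -/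
open Matrix MeasureTheory ProbabilityTheory Finset

/-!
Each AA-I step is a rank-one correction `B ↦ B + (J - B) s qᵀ / (qᵀ s)` with `q = P^⊥ s`: it makes
the new iterate agree with `J` on `s`, and it leaves `B - J` unchanged on every vector orthogonal
to `q`. Since `q` is orthogonal to `s_0, …, s_{t-1}`, induction shows that `B_t - J` kills
`s_0, …, s_{t-1}`; this is (a), it gives (b) because `P_t` maps into their span, and it gives (c)
by rank–nullity. Linear independence is what keeps `qᵀ s = ‖q‖²` nonzero.
-/

namespace Matrix

variable {K : Type*} [Field K] {m n : Type*} [Fintype n]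

theorem rank_le_card_sub_of_mulVec_eq_zero [Fintype m] (A : Matrix m n K) {t : ℕ}
    {v : Fin t → n → K} (hv : LinearIndependent K v) (hAv : ∀ i, A *ᵥ v i = 0) :
    A.rank ≤ Fintype.card n - t := by
  have hspan : Submodule.span K (Set.range v) ≤ LinearMap.ker A.mulVecLin := by
    rw [Submodule.span_le]
    rintro _ ⟨i, rfl⟩
    exact hAv i
  have hker : t ≤ Module.finrank K (LinearMap.ker A.mulVecLin) := by
    simpa [finrank_span_eq_card hv] using Submodule.finrank_mono hspan
  have hrank := LinearMap.finrank_range_add_finrank_ker A.mulVecLin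
  rw [Module.finrank_fintype_fun_eq_card] at hrank
  rw [Matrix.rank]
  omega

def aaIUpdate (B J : Matrix n n K) (s q : n → K) : Matrix n n K :=
  B + (q ⬝ᵥ s)⁻¹ • vecMulVec ((J - B) *ᵥ s) q

theorem aaIUpdate_sub_mulVec_self (B J : Matrix n n K) {s q : n → K} (hqs : q ⬝ᵥ s ≠ 0) :
    (aaIUpdate B J s q - J) *ᵥ s = 0 := by
  rw [aaIUpdate, add_sub_right_comm, add_mulVec, smul_mulVec, vecMulVec_mulVec]
  simp [smul_smul, inv_mul_cancel₀ hqs, sub_mulVec]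

theorem aaIUpdate_sub_mulVec_of_dotProduct_eq_zero (B J : Matrix n n K) (s : n → K)
    {q v : n → K} (hqv : q ⬝ᵥ v = 0) :
    (aaIUpdate B J s q - J) *ᵥ v = (B - J) *ᵥ v := by
  rw [aaIUpdate, add_sub_right_comm, add_mulVec, smul_mulVec, vecMulVec_mulVec]
  simp [hqv]

end Matrix

theorem LinearIndependent.notMem_span_image_Iio {K M : Type*} [Field K] [AddCommGroup M]
    [Module K M] {s : ℕ → M} {k t : ℕ} (hs : LinearIndependent K (fun i : Fin (k + 1) => s i))
    (ht : t ≤ k) : s t ∉ Submodule.span K (s '' Set.Iio t) := by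
  have himage : s '' Set.Iio t = (fun i : Fin (k + 1) => s i) '' {i | (i : ℕ) < t} := by
    ext x
    constructor
    · rintro ⟨i, hi, rfl⟩
      exact ⟨⟨i, by grind⟩, hi, rfl⟩
    · rintro ⟨i, hi, rfl⟩
      exact ⟨i, hi, rfl⟩
  rw [himage]
  exact hs.notMem_span_image (x := ⟨t, by omega⟩) (lt_irrefl t)

namespace IsOrthProj

variable {n : ℕ} {P : Matrix (Fin n) (Fin n) ℝ} {V : Submodule ℝ (Fin n → ℝ)}

theorem one_sub_mulVec_dotProduct_eq_zero (hP : IsOrthProj P V) (x : Fin n → ℝ) {v : Fin n → ℝ}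
    (hv : v ∈ V) : (1 - P) *ᵥ x ⬝ᵥ v = 0 := by
  have hsymm : (1 - P)ᵀ = 1 - P := (isSymm_one.sub hP.1).eq
  rw [dotProduct_comm, dotProduct_mulVec, ← mulVec_transpose, hsymm, sub_mulVec, one_mulVec,
    hP.2.2.2 v hv, sub_self, zero_dotProduct]

theorem one_sub_mulVec_dotProduct_self_ne_zero (hP : IsOrthProj P V) {x : Fin n → ℝ}
    (hx : x ∉ V) : (1 - P) *ᵥ x ⬝ᵥ x ≠ 0 := by
  have hdecomp : x = P *ᵥ x + (1 - P) *ᵥ x := by simp [sub_mulVec]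
  have hne : (1 - P) *ᵥ x ≠ 0 := fun h ↦ hx (by
    have hfix : x = P *ᵥ x := by simpa [h] using hdecomp
    exact hfix ▸ hP.2.2.1 x)
  have hsplit : (1 - P) *ᵥ x ⬝ᵥ x = (1 - P) *ᵥ x ⬝ᵥ P *ᵥ x + (1 - P) *ᵥ x ⬝ᵥ (1 - P) *ᵥ x := by
    rw [← dotProduct_add, ← hdecomp]
  rw [hsplit, hP.one_sub_mulVec_dotProduct_eq_zero x (hP.2.2.1 x), zero_add]
  exact fun h ↦ hne (dotProduct_self_eq_zero.mp h)

theorem mul_one_sub_eq_self (hP : IsOrthProj P V) {A : Matrix (Fin n) (Fin n) ℝ}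
    (hA : V ≤ LinearMap.ker A.mulVecLin) : A * (1 - P) = A := by
  rw [ext_iff_mulVec]
  intro x
  have hPx : A *ᵥ (P *ᵥ x) = 0 := hA (hP.2.2.1 x)
  rw [← mulVec_mulVec, sub_mulVec, one_mulVec, mulVec_sub, hPx, sub_zero]

end IsOrthProj

theorem aaI_iterate_sub_mulVec_eq_zero {n : ℕ} (J : Matrix (Fin n) (Fin n) ℝ)
    (B : ℕ → Matrix (Fin n) (Fin n) ℝ) (s : ℕ → Fin n → ℝ)
    (P : ℕ → Matrix (Fin n) (Fin n) ℝ) (k : ℕ)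
    (hP : ∀ t ≤ k, IsOrthProj (P t) (Submodule.span ℝ (s '' Set.Iio t)))
    (hBup : ∀ t ≤ k, B (t + 1) = aaIUpdate (B t) J (s t) ((1 - P t) *ᵥ s t))
    (hindep : LinearIndependent ℝ (fun i : Fin (k + 1) => s i)) :
    ∀ t ≤ k + 1, ∀ i < t, (B t - J) *ᵥ s i = 0 := by
  intro t
  induction t with
  | zero => intro _ i hi; omega
  | succ t ih =>
    intro ht i hi
    have htk : t ≤ k := by omega
    rw [hBup t htk]
    rcases Nat.lt_succ_iff_lt_or_eq.mp hi with hit | rfl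
    · have horth := (hP t htk).one_sub_mulVec_dotProduct_eq_zero (s t)
        (Submodule.subset_span ⟨i, hit, rfl⟩)
      rw [aaIUpdate_sub_mulVec_of_dotProduct_eq_zero _ _ _ horth, ih (by omega) i hit]
    · exact aaIUpdate_sub_mulVec_self _ _
        ((hP i htk).one_sub_mulVec_dotProduct_self_ne_zero (hindep.notMem_span_image_Iio htk))

theorem stmt_8 {n : ℕ} (J : Matrix (Fin n) (Fin n) ℝ)
    (B : ℕ → Matrix (Fin n) (Fin n) ℝ) (s : ℕ → Fin n → ℝ)
    (P : ℕ → Matrix (Fin n) (Fin n) ℝ) (k : ℕ)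
    (hP : ∀ t ≤ k, IsOrthProj (P t) (Submodule.span ℝ (s '' Set.Iio t)))
    (hBup : ∀ t ≤ k, B (t + 1) = B t +
      ((((1 : Matrix (Fin n) (Fin n) ℝ) - P t).mulVec (s t)) ⬝ᵥ (s t))⁻¹ •
        Matrix.vecMulVec ((J - B t).mulVec (s t))
          (((1 : Matrix (Fin n) (Fin n) ℝ) - P t).mulVec (s t)))
    (hindep : LinearIndependent ℝ (fun i : Fin (k + 1) => s i)) :
    (∀ i t : ℕ, i ≤ t → t ≤ k → (B (t + 1) - J).mulVec (s i) = 0) ∧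
    (∀ t ≤ k, (J - B t) * ((1 : Matrix (Fin n) (Fin n) ℝ) - P t) = J - B t) ∧
    (∀ t ≤ k + 1, (B t - J).rank ≤ n - t) := by
  have hkernel := aaI_iterate_sub_mulVec_eq_zero J B s P k hP hBup hindep
  refine ⟨fun i t hit htk ↦ hkernel (t + 1) (by omega) i (by omega), fun t ht ↦ ?_, fun t ht ↦ ?_⟩
  · refine (hP t ht).mul_one_sub_eq_self (Submodule.span_le.mpr ?_)
    rintro _ ⟨i, hi, rfl⟩
    rw [SetLike.mem_coe, LinearMap.mem_ker, mulVecLin_apply, ← neg_sub, neg_mulVec,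
      hkernel t (by omega) i hi, neg_zero]
  · simpa using rank_le_card_sub_of_mulVec_eq_zero (B t - J)
      (hindep.comp (Fin.castLE ht) (Fin.castLE_injective ht)) fun i ↦ hkernel t ht i i.2
end

section
/- Let R_0 ∈ ℝ^{n×n} and vectors s_0, s_1, … ∈ ℝⁿ be given, and define R_{k+1} = R_k − (R_k s_k s_kᵀ R_kᵀ / (s_kᵀ R_kᵀ R_k s_k)) R_k if R_k s_k ≠ 0, and R_{k+1} = R_k otherwise. Then for every k: R_{k+1} s_k = 0, and ker(R_k) ⊆ ker(R_{k+1}); consequently R_{k+1} s_i = 0 for all 0 ≤ i ≤ k. -/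
open Matrix MeasureTheory ProbabilityTheory Finset

lemma vecMulVec_mulVec' {n : ℕ} (w u x : Fin n → ℝ) :
    (Matrix.vecMulVec w u).mulVec x = (u ⬝ᵥ x) • w := by
  ext i
  simp [Matrix.vecMulVec_apply, Matrix.mulVec, dotProduct, Finset.mul_sum,
    mul_comm, mul_assoc, mul_left_comm]

theorem stmt_9 {n : ℕ} (R : ℕ → Matrix (Fin n) (Fin n) ℝ) (s : ℕ → Fin n → ℝ)
    (hR : ∀ k, R (k + 1) =
      if (R k).mulVec (s k) = 0 then R k
      else R k - (((R k).mulVec (s k)) ⬝ᵥ ((R k).mulVec (s k)))⁻¹ •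
        (Matrix.vecMulVec ((R k).mulVec (s k)) ((R k).mulVec (s k)) * R k)) :
    ∀ k : ℕ,
      (R (k + 1)).mulVec (s k) = 0 ∧
      LinearMap.ker (R k).mulVecLin ≤ LinearMap.ker (R (k + 1)).mulVecLin ∧
      ∀ i ≤ k, (R (k + 1)).mulVec (s i) = 0 := by
  have key : ∀ k, (R (k+1)).mulVec (s k) = 0 ∧
      ∀ v, (R k).mulVec v = 0 → (R (k+1)).mulVec v = 0 := by
    intro k
    by_cases h : (R k).mulVec (s k) = 0
    · rw [hR k, if_pos h]
      exact ⟨h, fun v hv => hv⟩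
    · set u := (R k).mulVec (s k) with hu_def
      have hu : u ⬝ᵥ u ≠ 0 := by
        intro hc
        exact h (dotProduct_self_eq_zero.mp hc)
      have hform : ∀ v, (R (k+1)).mulVec v =
          (R k).mulVec v - (u ⬝ᵥ u)⁻¹ • ((u ⬝ᵥ (R k).mulVec v) • u) := by
        intro v
        rw [hR k, if_neg h, Matrix.sub_mulVec, Matrix.smul_mulVec,
          ← Matrix.mulVec_mulVec, vecMulVec_mulVec']
      constructor
      · rw [hform, ← hu_def, smul_smul, inv_mul_cancel₀ hu, one_smul, sub_self]
      · intro v hv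
        rw [hform, hv]
        simp
  intro k
  refine ⟨(key k).1, fun v hv => (key k).2 v hv, ?_⟩
  induction k with
  | zero =>
    intro i hi
    interval_cases i
    exact (key 0).1
  | succ k ih =>
    intro i hi
    rcases Nat.lt_succ_iff_lt_or_eq.mp (Nat.lt_succ_of_le hi) with h' | h'
    · exact (key (k+1)).2 _ (ih _ (Nat.lt_succ_iff.mp h'))
    · rw [h']
      exact (key (k+1)).1
end

section
/- Let R ∈ ℝ^{n×n} and s ∈ ℝⁿ with R s ≠ 0, and define R' = R − (R s sᵀ Rᵀ / (sᵀ Rᵀ R s)) R. Then ‖R'‖_F² = ‖R‖_F² − sᵀ (Rᵀ R)² s / (sᵀ Rᵀ R s), and consequently ‖R'‖_F² ≤ ‖R‖_F² − sᵀ Rᵀ R s / (sᵀ s). -/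
open Matrix MeasureTheory ProbabilityTheory Finset

theorem stmt_10 {n : ℕ} (R : Matrix (Fin n) (Fin n) ℝ) (s : Fin n → ℝ)
    (hRs : R.mulVec s ≠ 0)
    (R' : Matrix (Fin n) (Fin n) ℝ)
    (hR' : R' = R - (s ⬝ᵥ ((Rᵀ * R).mulVec s))⁻¹ •
      (Matrix.vecMulVec (R.mulVec s) (R.mulVec s) * R)) :
    frob R' ^ 2 = frob R ^ 2 -
        (s ⬝ᵥ ((Rᵀ * R * (Rᵀ * R)).mulVec s)) / (s ⬝ᵥ ((Rᵀ * R).mulVec s)) ∧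
    frob R' ^ 2 ≤ frob R ^ 2 - (s ⬝ᵥ ((Rᵀ * R).mulVec s)) / (s ⬝ᵥ s) := by
  classical
  have frob_sq : ∀ A : Matrix (Fin n) (Fin n) ℝ, frob A ^ 2 = ∑ i, ∑ j, A i j ^ 2 := fun A =>
    Real.sq_sqrt (Finset.sum_nonneg fun i _ => Finset.sum_nonneg fun j _ => sq_nonneg _)
  set u := R.mulVec s with hu
  set w := Rᵀ.mulVec u with hwdef
  have hwm : (Rᵀ * R).mulVec s = w := by rw [hwdef, hu, Matrix.mulVec_mulVec]
  set c := u ⬝ᵥ u with hcdef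
  have hc : s ⬝ᵥ ((Rᵀ * R).mulVec s) = c := by
    rw [hwm, hwdef, Matrix.dotProduct_mulVec, Matrix.vecMul_transpose, ← hu, hcdef]
  have hq : s ⬝ᵥ ((Rᵀ * R * (Rᵀ * R)).mulVec s) = w ⬝ᵥ w := by
    rw [← Matrix.mulVec_mulVec, hwm, Matrix.dotProduct_mulVec, ← Matrix.mulVec_transpose,
      Matrix.transpose_mul, Matrix.transpose_transpose, hwm]
  have hcpos : 0 < c := by
    rcases lt_or_eq_of_le (Finset.sum_nonneg fun i (_ : i ∈ univ) => mul_self_nonneg (u i)) with h | h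
    · exact h
    · exact absurd (dotProduct_self_eq_zero.mp h.symm) hRs
  have hcne : c ≠ 0 := ne_of_gt hcpos
  have hwk : ∀ j, (∑ i, u i * R i j) = w j := by
    intro j
    simp [hwdef, Matrix.mulVec, dotProduct, Matrix.transpose_apply, mul_comm]
  have key : frob R' ^ 2 = frob R ^ 2 - (w ⬝ᵥ w) / c := by
    rw [frob_sq, frob_sq, hR', hc]
    have hentry : ∀ i j, (R - c⁻¹ • (Matrix.vecMulVec u u * R)) i j
        = R i j - c⁻¹ * (u i * ∑ k, u k * R k j) := by
      intro i j
      simp [Matrix.sub_apply, Matrix.smul_apply, Matrix.mul_apply, Matrix.vecMulVec_apply,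
        Finset.mul_sum, mul_assoc]
    have inner : ∀ j, ∑ i, (R - c⁻¹ • (Matrix.vecMulVec u u * R)) i j ^ 2
        = (∑ i, R i j ^ 2) - c⁻¹ * (w j * w j) := by
      intro j
      have hce : ∑ i, u i * u i = c := rfl
      calc ∑ i, (R - c⁻¹ • (Matrix.vecMulVec u u * R)) i j ^ 2
          = ∑ i, (R i j ^ 2 - 2 * c⁻¹ * w j * (u i * R i j)
              + c⁻¹ ^ 2 * (w j * w j) * (u i * u i)) := by
            apply Finset.sum_congr rfl
            intro i _
            rw [hentry, hwk]
            ring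
        _ = (∑ i, R i j ^ 2) - 2 * c⁻¹ * w j * (∑ i, u i * R i j)
              + c⁻¹ ^ 2 * (w j * w j) * (∑ i, u i * u i) := by
            rw [Finset.sum_add_distrib, Finset.sum_sub_distrib, Finset.mul_sum, Finset.mul_sum]
        _ = (∑ i, R i j ^ 2) - c⁻¹ * (w j * w j) := by
            rw [hwk, hce]
            field_simp
            ring
    rw [Finset.sum_comm]
    simp only [inner]
    rw [Finset.sum_sub_distrib, ← Finset.mul_sum, Finset.sum_comm (f := fun j i => R i j ^ 2)]
    rw [div_eq_inv_mul]
    rfl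
  refine ⟨by rw [key, hq, hc], ?_⟩
  have hs0 : s ≠ 0 := by
    rintro rfl
    exact hRs (by simp [hu])
  have hspos : 0 < s ⬝ᵥ s := by
    rcases lt_or_eq_of_le (Finset.sum_nonneg fun i (_ : i ∈ univ) => mul_self_nonneg (s i)) with h | h
    · exact h
    · exact absurd (dotProduct_self_eq_zero.mp h.symm) hs0
  have hcs : c ^ 2 ≤ (s ⬝ᵥ s) * (w ⬝ᵥ w) := by
    have hsw : s ⬝ᵥ w = c := by rw [← hwm, hc]
    have h2 := Finset.sum_mul_sq_le_sq_mul_sq univ s w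
    calc c ^ 2 = (∑ i, s i * w i) ^ 2 := by rw [← hsw]; rfl
      _ ≤ (∑ i, s i ^ 2) * (∑ i, w i ^ 2) := h2
      _ = (s ⬝ᵥ s) * (w ⬝ᵥ w) := by simp [dotProduct, sq]
  rw [key, hc]
  have : c / (s ⬝ᵥ s) ≤ (w ⬝ᵥ w) / c := by
    rw [div_le_div_iff₀ hspos hcpos]
    calc c * c = c ^ 2 := (sq c).symm
      _ ≤ (s ⬝ᵥ s) * (w ⬝ᵥ w) := hcs
      _ = (w ⬝ᵥ w) * (s ⬝ᵥ s) := mul_comm _ _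
  linarith
end

section
/- Let (r_k) and (σ_k) be sequences of nonnegative reals and let c, M > 0 be constants such that: (i) σ_{k+1} ≤ σ_k + M r_k for all k ≥ 0; (ii) for every k with c(σ_k + M r_k) < 1, r_{k+1} ≤ ((3 c M r_k / 2 + c σ_k) / (1 − c(σ_k + M r_k))) · r_k; and (iii) c(σ_0 + 4 M r_0) ≤ 1/3. Then r_{k+1} ≤ r_k / 2 for all k ≥ 0. -/
open Matrix MeasureTheory ProbabilityTheory Finset

theorem stmt_14 (r σ : ℕ → ℝ) (c M : ℝ) (hc : 0 < c) (hM : 0 < M)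
    (hr : ∀ k, 0 ≤ r k) (hσ : ∀ k, 0 ≤ σ k)
    (h1 : ∀ k, σ (k + 1) ≤ σ k + M * r k)
    (h2 : ∀ k, c * (σ k + M * r k) < 1 →
      r (k + 1) ≤ (3 * c * M * r k / 2 + c * σ k) / (1 - c * (σ k + M * r k)) * r k)
    (h3 : c * (σ 0 + 4 * M * r 0) ≤ 1 / 3) :
    ∀ k, r (k + 1) ≤ r k / 2 := by
  have key : ∀ k, c * (σ k + 4 * M * r k) ≤ 1 / 3 ∧ r (k + 1) ≤ r k / 2 := by
    intro k
    induction k with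
    | zero =>
      refine ⟨h3, ?_⟩
      · -- step lemma inline
        have hinv := h3
        have hcMr : 0 ≤ c * (M * r 0) := mul_nonneg hc.le (mul_nonneg hM.le (hr 0))
        have hcs : 0 ≤ c * σ 0 := mul_nonneg hc.le (hσ 0)
        have hlt : c * (σ 0 + M * r 0) < 1 := by nlinarith
        have h := h2 0 hlt
        have hden : (2:ℝ)/3 ≤ 1 - c * (σ 0 + M * r 0) := by nlinarith
        have hfrac : (3 * c * M * r 0 / 2 + c * σ 0) / (1 - c * (σ 0 + M * r 0)) ≤ 1/2 := by
          rw [div_le_iff₀ (by linarith)]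
          nlinarith
        calc r 1 ≤ (3 * c * M * r 0 / 2 + c * σ 0) / (1 - c * (σ 0 + M * r 0)) * r 0 := h
          _ ≤ 1/2 * r 0 := mul_le_mul_of_nonneg_right hfrac (hr 0)
          _ = r 0 / 2 := by ring
    | succ n ih =>
      obtain ⟨hinv, hhalf⟩ := ih
      have hinv' : c * (σ (n+1) + 4 * M * r (n+1)) ≤ 1 / 3 := by
        have := h1 n
        have e1 := mul_le_mul_of_nonneg_left this hc.le
        have e2 := mul_le_mul_of_nonneg_left hhalf (by nlinarith : (0:ℝ) ≤ 4 * c * M)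
        have g1 : c * (σ (n+1) + 4 * M * r (n+1)) = c * σ (n+1) + 4 * c * M * r (n+1) := by ring
        have g2 : c * (σ n + 4 * M * r n) = c * σ n + 4 * c * M * r n := by ring
        have g3 : c * (σ n + M * r n) = c * σ n + c * M * r n := by ring
        have g4 : 4 * c * M * (r n / 2) = 2 * (c * M * r n) := by ring
        have g5 : 0 ≤ c * M * r n := mul_nonneg (mul_nonneg hc.le hM.le) (hr n)
        linarith
      refine ⟨hinv', ?_⟩
      set k := n + 1
      have hcMr : 0 ≤ c * (M * r k) := mul_nonneg hc.le (mul_nonneg hM.le (hr k))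
      have hcs : 0 ≤ c * σ k := mul_nonneg hc.le (hσ k)
      have hlt : c * (σ k + M * r k) < 1 := by nlinarith [hr k]
      have h := h2 k hlt
      have hden : (2:ℝ)/3 ≤ 1 - c * (σ k + M * r k) := by nlinarith [hr k]
      have hfrac : (3 * c * M * r k / 2 + c * σ k) / (1 - c * (σ k + M * r k)) ≤ 1/2 := by
        rw [div_le_iff₀ (by linarith)]
        nlinarith [hr k]
      calc r (k+1) ≤ (3 * c * M * r k / 2 + c * σ k) / (1 - c * (σ k + M * r k)) * r k := h
        _ ≤ 1/2 * r k := mul_le_mul_of_nonneg_right hfrac (hr k)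
        _ = r k / 2 := by ring
  exact fun k => (key k).2
end

section
/- Let matrices B_i, B_{i+1}, …, B_{k+1} and J_i, …, J_k in ℝ^{n×n} and vectors s_i, …, s_k in ℝⁿ satisfy B_{t+1} = AAA(B_t, J_t, s_t) for i ≤ t ≤ k. Then for any matrix A ∈ ℝ^{n×n}: (a) ‖B_{t+1} − A‖_F ≤ ‖B_t − A‖_F + ‖J_t − A‖_F for each t; and (b) ‖(B_{k+1} − A) s_i‖ ≤ Σ_{t=i}^{k} ‖(J_t − A) s_i‖ ≤ (Σ_{t=i}^{k} ‖J_t − A‖_F) · ‖s_i‖. -/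
/-! Write `u = (J - B) s` and `P` for the orthogonal projection onto `span {u}` in ℝⁿ. Then
`AAA(B, J, s) v = B v + P ((J - B) v)` (also when `u = 0`, where `P = 0`), so
`(AAA(B, J, s) - A) v = (I - P) ((B - A) v) + P ((J - A) v)`. Both `I - P` and `P` are
contractions, which bounds `‖(AAA(B, J, s) - A) v‖` by `‖(B - A) v‖ + ‖(J - A) v‖`; applied to the
columns this gives (a), and since `P u = u` the update reproduces `(J - A) s` exactly, so iterating
the column bound from `t = i` gives (b). The last inequality is `‖M v‖ ≤ ‖M‖_F ‖v‖`. -/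

open Matrix MeasureTheory ProbabilityTheory Finset

open WithLp

variable {n : ℕ}

lemma enorm'_eq_norm (v : Fin n → ℝ) : enorm' v = ‖toLp 2 v‖ := by
  simp [enorm', EuclideanSpace.norm_eq]

lemma frob_eq_enorm'_colNorms (M : Matrix (Fin n) (Fin n) ℝ) :
    frob M = enorm' fun j => enorm' (M *ᵥ Pi.single j 1) := by
  rw [frob, enorm', Finset.sum_comm]
  congr 1
  refine Finset.sum_congr rfl fun j _ => ?_
  rw [enorm', Real.sq_sqrt (by positivity)]
  simp

section

attribute [local instance] Matrix.frobeniusNormedAddCommGroup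

lemma frob_eq_frobenius_norm (M : Matrix (Fin n) (Fin n) ℝ) : frob M = ‖M‖ := by
  simp [frob, Matrix.frobenius_norm_def, Real.sqrt_eq_rpow]

lemma enorm'_mulVec_le (M : Matrix (Fin n) (Fin n) ℝ) (v : Fin n → ℝ) :
    enorm' (M *ᵥ v) ≤ frob M * enorm' v := by
  rw [enorm'_eq_norm, enorm'_eq_norm, frob_eq_frobenius_norm,
    ← Matrix.frobenius_norm_replicateCol (ι := Unit),
    ← Matrix.frobenius_norm_replicateCol (ι := Unit), Matrix.replicateCol_mulVec]
  exact Matrix.frobenius_norm_mul _ _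

end

lemma enorm'_le_enorm' {v w : Fin n → ℝ} (h0 : ∀ j, 0 ≤ v j) (h : ∀ j, v j ≤ w j) :
    enorm' v ≤ enorm' w :=
  Real.sqrt_le_sqrt <| Finset.sum_le_sum fun j _ => pow_le_pow_left₀ (h0 j) (h j) 2

lemma frob_le_add_of_mulVec_single_le {M X Y : Matrix (Fin n) (Fin n) ℝ}
    (h : ∀ j, enorm' (M *ᵥ Pi.single j 1) ≤
      enorm' (X *ᵥ Pi.single j 1) + enorm' (Y *ᵥ Pi.single j 1)) :
    frob M ≤ frob X + frob Y := by
  simp only [frob_eq_enorm'_colNorms]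
  calc _ ≤ enorm' ((fun j => enorm' (X *ᵥ Pi.single j 1)) +
          fun j => enorm' (Y *ᵥ Pi.single j 1)) :=
        enorm'_le_enorm' (fun j => Real.sqrt_nonneg _) h
    _ ≤ _ := by simpa only [enorm'_eq_norm, toLp_add] using norm_add_le _ _

theorem Submodule.norm_sub_starProjection_add_starProjection_le {𝕜 E : Type*} [RCLike 𝕜]
    [NormedAddCommGroup E] [InnerProductSpace 𝕜 E] (K : Submodule 𝕜 E)
    [K.HasOrthogonalProjection] (x y : E) :
    ‖x - K.starProjection x + K.starProjection y‖ ≤ ‖x‖ + ‖y‖ := by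
  rw [← K.starProjection_orthogonal_val]
  exact (norm_add_le _ _).trans
    (add_le_add (Kᗮ.norm_starProjection_apply_le x) (K.norm_starProjection_apply_le y))

lemma AAAupd_mulVec (B J : Matrix (Fin n) (Fin n) ℝ) (s v : Fin n → ℝ) :
    AAAupd B J s *ᵥ v = B *ᵥ v +
      (((J - B) *ᵥ v) ⬝ᵥ ((J - B) *ᵥ s) / ((J - B) *ᵥ s ⬝ᵥ (J - B) *ᵥ s)) • ((J - B) *ᵥ s) := by
  unfold AAAupd
  split_ifs with h
  · simp [h]
  · rw [add_mulVec, smul_mulVec, ← mulVec_mulVec, vecMulVec_mulVec, op_smul_eq_smul, smul_smul,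
      div_eq_inv_mul, dotProduct_comm ((J - B) *ᵥ v)]

lemma toLp_AAAupd_mulVec (B J : Matrix (Fin n) (Fin n) ℝ) (s v : Fin n → ℝ) :
    toLp 2 (AAAupd B J s *ᵥ v) = toLp 2 (B *ᵥ v) +
      (ℝ ∙ toLp 2 ((J - B) *ᵥ s)).starProjection (toLp 2 ((J - B) *ᵥ v)) := by
  rw [Submodule.starProjection_singleton, AAAupd_mulVec, EuclideanSpace.inner_toLp_toLp,
    ← enorm'_eq_norm, enorm', Real.sq_sqrt (by positivity)]
  simp [dotProduct, sq]

lemma AAAupd_sub_mulVec_self (B J A : Matrix (Fin n) (Fin n) ℝ) (s : Fin n → ℝ) :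
    (AAAupd B J s - A) *ᵥ s = (J - A) *ᵥ s := by
  have hproj : (ℝ ∙ toLp 2 ((J - B) *ᵥ s)).starProjection (toLp 2 ((J - B) *ᵥ s)) =
      toLp 2 ((J - B) *ᵥ s) :=
    Submodule.starProjection_eq_self_iff.mpr (Submodule.mem_span_singleton_self _)
  have hJ : AAAupd B J s *ᵥ s = J *ᵥ s := by
    apply toLp_injective 2
    rw [toLp_AAAupd_mulVec, hproj, ← toLp_add, sub_mulVec, add_sub_cancel]
  rw [sub_mulVec, hJ, sub_mulVec]

lemma enorm'_AAAupd_sub_mulVec_le (B J A : Matrix (Fin n) (Fin n) ℝ) (s v : Fin n → ℝ) :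
    enorm' ((AAAupd B J s - A) *ᵥ v) ≤ enorm' ((B - A) *ᵥ v) + enorm' ((J - A) *ᵥ v) := by
  set P := (ℝ ∙ toLp 2 ((J - B) *ᵥ s)).starProjection
  have hsplit : toLp 2 ((AAAupd B J s - A) *ᵥ v) =
      toLp 2 ((B - A) *ᵥ v) - P (toLp 2 ((B - A) *ᵥ v)) + P (toLp 2 ((J - A) *ᵥ v)) := by
    have hJB : (J - B) *ᵥ v = (J - A) *ᵥ v - (B - A) *ᵥ v := by
      simp only [sub_mulVec]; abel
    rw [sub_mulVec, toLp_sub, toLp_AAAupd_mulVec, hJB, toLp_sub, map_sub, sub_mulVec B A,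
      toLp_sub]
    abel
  simp only [enorm'_eq_norm, hsplit]
  exact Submodule.norm_sub_starProjection_add_starProjection_le _ _ _

lemma frob_AAAupd_sub_le (B J A : Matrix (Fin n) (Fin n) ℝ) (s : Fin n → ℝ) :
    frob (AAAupd B J s - A) ≤ frob (B - A) + frob (J - A) :=
  frob_le_add_of_mulVec_single_le fun _ => enorm'_AAAupd_sub_mulVec_le B J A s _

lemma enorm'_sub_mulVec_le_sum_of_AAAupd {B J : ℕ → Matrix (Fin n) (Fin n) ℝ}
    {s : ℕ → Fin n → ℝ} {i m : ℕ} (him : i ≤ m)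
    (hupd : ∀ t, i ≤ t → t ≤ m → B (t + 1) = AAAupd (B t) (J t) (s t))
    (A : Matrix (Fin n) (Fin n) ℝ) :
    enorm' ((B (m + 1) - A) *ᵥ s i) ≤ ∑ t ∈ Finset.Icc i m, enorm' ((J t - A) *ᵥ s i) := by
  induction m, him using Nat.le_induction with
  | base =>
    rw [hupd i le_rfl le_rfl, Finset.Icc_self, Finset.sum_singleton, AAAupd_sub_mulVec_self]
  | succ m him ih =>
    rw [hupd (m + 1) (him.trans m.le_succ) le_rfl, Finset.sum_Icc_succ_top (him.trans m.le_succ)]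
    exact (enorm'_AAAupd_sub_mulVec_le _ _ _ _ _).trans
      (add_le_add_left (ih fun t ht htm => hupd t ht (htm.trans m.le_succ)) _)

theorem stmt_17 {n : ℕ} (B Jm : ℕ → Matrix (Fin n) (Fin n) ℝ) (s : ℕ → Fin n → ℝ)
    (i k : ℕ) (hik : i ≤ k)
    (hupd : ∀ t, i ≤ t → t ≤ k → B (t + 1) = AAAupd (B t) (Jm t) (s t))
    (A : Matrix (Fin n) (Fin n) ℝ) :
    (∀ t, i ≤ t → t ≤ k → frob (B (t + 1) - A) ≤ frob (B t - A) + frob (Jm t - A)) ∧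
    enorm' ((B (k + 1) - A).mulVec (s i)) ≤
      ∑ t ∈ Finset.Icc i k, enorm' ((Jm t - A).mulVec (s i)) ∧
    ∑ t ∈ Finset.Icc i k, enorm' ((Jm t - A).mulVec (s i)) ≤
      (∑ t ∈ Finset.Icc i k, frob (Jm t - A)) * enorm' (s i) := by
  refine ⟨fun t hit htk => ?_, enorm'_sub_mulVec_le_sum_of_AAAupd hik hupd A, ?_⟩
  · rw [hupd t hit htk]
    exact frob_AAAupd_sub_le _ _ _ _
  · rw [Finset.sum_mul]
    exact Finset.sum_le_sum fun t _ => enorm'_mulVec_le _ _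
end
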